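/- The two-focus hyperbola with foci i and 2i and distance-difference log(3/2) coincides with a focus/directrix hyperbola: {z ∈ ℍ : |dist z i − dist z (2i)| = log(3/2)} = {z = x + iy ∈ ℍ : 24 + 6x⁴ − 26y² + 6y⁴ + 3x²(−17 + 4y²) = 0} = {z ∈ ℍ : sinh(dist z i) = (√77/5)·sinh(Metric.infDist z ℓ_{√(11/7)})}. -/

import Mathlib

/-!
Everything is computed in the coordinates `z = x + iy`. For a point `ti` of the imaginary
axis, `cosh d(z, ti) = (x² + y² + t²) / (2ty)`. Since the foci are `log 2 > log (3/2)` apart, the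
equation `|d₁ - d₂| = L` is equivalent to `(cosh d₁ cosh d₂ - cosh L)² = sinh² d₁ sinh² d₂`,
which in coordinates is the quartic. For the directrix, `u = a + iv ∈ ℓ_R` satisfies
`(2Ryv sinh d(z, u))² = v²(|z|² - R²)² + (2R²x - a(|z|² + R²))²`, so
`sinh d(z, ℓ_R) = ||z|² - R²| / (2Ry)`, attained where the second square vanishes; with
`R² = 11/7` the focus/directrix equation squares to the same quartic.
-/

open UpperHalfPlane

/-- The geodesic `ℓ_R = {u ∈ ℍ : |u| = R}` in the upper half-plane. -/
noncomputable def ell (R : ℝ) : Set ℍ := {u : ℍ | ‖(u : ℂ)‖ = R}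

/-- The point `t·i` of the upper half-plane, for `t > 0`. -/
noncomputable def vpt (t : ℝ) (ht : 0 < t) : ℍ :=
  UpperHalfPlane.mk (t * Complex.I) (by simpa using ht)

open Real

theorem Real.cosh_eq_cosh_iff {x y : ℝ} : cosh x = cosh y ↔ |x| = |y| := by
  rw [le_antisymm_iff, cosh_le_cosh, cosh_le_cosh, ← le_antisymm_iff]

theorem Real.abs_sub_eq_iff_cosh_of_lt_add {d₁ d₂ L : ℝ} (hL : 0 ≤ L)
    (h : L < d₁ + d₂) : |d₁ - d₂| = L ↔
      (cosh d₁ * cosh d₂ - cosh L) ^ 2 = (cosh d₁ ^ 2 - 1) * (cosh d₂ ^ 2 - 1) := by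
  have hcosh (t : ℝ) : cosh t = cosh L ↔ |t| = L := by rw [cosh_eq_cosh_iff, abs_of_nonneg hL]
  rw [← hcosh, cosh_sub, ← sinh_sq, ← sinh_sq, ← mul_pow, sq_eq_sq_iff_eq_or_eq_neg]
  constructor
  · intro h'
    left
    linarith
  · rintro (h' | h')
    · linarith
    · have hadd : cosh (d₁ + d₂) = cosh L := by rw [cosh_add]; linarith
      exact absurd ((hcosh _).1 hadd) (le_abs_self _ |>.trans_lt' h).ne'

namespace UpperHalfPlane

theorem cosh_dist_eq_re_im (z w : ℍ) :
    cosh (dist z w) = ((z.re - w.re) ^ 2 + z.im ^ 2 + w.im ^ 2) / (2 * z.im * w.im) := by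
  have := z.im_pos
  have := w.im_pos
  rw [cosh_dist, Complex.dist_eq_re_im, sq_sqrt (by positivity), coe_re, coe_re, coe_im, coe_im]
  field_simp
  ring

theorem sq_mul_sinh_dist (z w : ℍ) :
    (2 * z.im * w.im * sinh (dist z w)) ^ 2 =
      ((z.re - w.re) ^ 2 + (z.im - w.im) ^ 2) * ((z.re - w.re) ^ 2 + (z.im + w.im) ^ 2) := by
  have := z.im_pos
  have := w.im_pos
  rw [mul_pow, sinh_sq, cosh_dist_eq_re_im]
  field_simp
  ring

end UpperHalfPlane

theorem vpt_re {t : ℝ} (ht : 0 < t) : (vpt t ht).re = 0 := by simp [vpt]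

theorem vpt_im {t : ℝ} (ht : 0 < t) : (vpt t ht).im = t := by simp [vpt]

theorem re_sq_add_im_sq_of_mem_ell {R : ℝ} {u : ℍ} (hu : u ∈ ell R) :
    u.re ^ 2 + u.im ^ 2 = R ^ 2 := by
  rw [← (show ‖(u : ℂ)‖ = R from hu), Complex.norm_eq_sqrt_sq_add_sq, sq_sqrt (by positivity),
    coe_re, coe_im]

theorem mem_ell_of_re_sq_add_im_sq {R : ℝ} (hR : 0 ≤ R) {u : ℍ}
    (hu : u.re ^ 2 + u.im ^ 2 = R ^ 2) : u ∈ ell R := by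
  show ‖(u : ℂ)‖ = R
  rw [Complex.norm_eq_sqrt_sq_add_sq, coe_re, coe_im, hu, sqrt_sq hR]

theorem sq_mul_sinh_dist_of_mem_ell {R : ℝ} (z : ℍ) {u : ℍ} (hu : u ∈ ell R) :
    (2 * R * z.im * u.im * sinh (dist z u)) ^ 2 =
      (u.im * (z.re ^ 2 + z.im ^ 2 - R ^ 2)) ^ 2
        + (2 * R ^ 2 * z.re - u.re * (z.re ^ 2 + z.im ^ 2 + R ^ 2)) ^ 2 := by
  calc _ = R ^ 2 * (2 * z.im * u.im * sinh (dist z u)) ^ 2 := by ring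
    _ = _ := by rw [sq_mul_sinh_dist, ← re_sq_add_im_sq_of_mem_ell hu]; ring

theorem div_le_sinh_dist_of_mem_ell {R : ℝ} (hR : 0 < R) (z : ℍ) {u : ℍ} (hu : u ∈ ell R) :
    |z.re ^ 2 + z.im ^ 2 - R ^ 2| / (2 * R * z.im) ≤ sinh (dist z u) := by
  have hy := z.im_pos
  have hv := u.im_pos
  have hsq : (u.im * (z.re ^ 2 + z.im ^ 2 - R ^ 2)) ^ 2 ≤
      (2 * R * z.im * u.im * sinh (dist z u)) ^ 2 := by
    rw [sq_mul_sinh_dist_of_mem_ell z hu]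
    exact le_add_of_nonneg_right (sq_nonneg _)
  have hbound := abs_le_of_sq_le_sq hsq (by positivity)
  rw [abs_mul, abs_of_pos hv] at hbound
  rw [div_le_iff₀ (by positivity)]
  exact le_of_mul_le_mul_left (by linear_combination hbound) hv

theorem exists_mem_ell_sinh_dist_eq {R : ℝ} (hR : 0 < R) (z : ℍ) :
    ∃ u ∈ ell R, sinh (dist z u) = |z.re ^ 2 + z.im ^ 2 - R ^ 2| / (2 * R * z.im) := by
  have hy := z.im_pos
  set s := z.re ^ 2 + z.im ^ 2
  have hden : 0 < s + R ^ 2 := by positivity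
  -- `a + iv` is the foot of the perpendicular from `z` to `ℓ_R`: this `a` kills the second square
  set a := 2 * R ^ 2 * z.re / (s + R ^ 2)
  have hv : 0 < R ^ 2 - a ^ 2 := by
    have : R ^ 2 - a ^ 2 =
        R ^ 2 * ((s - R ^ 2) ^ 2 + 4 * R ^ 2 * z.im ^ 2) / (s + R ^ 2) ^ 2 := by
      simp only [a, s]
      field_simp
      ring
    rw [this]
    positivity
  let u : ℍ := ⟨⟨a, √(R ^ 2 - a ^ 2)⟩, sqrt_pos.2 hv⟩
  have hu : u ∈ ell R := mem_ell_of_re_sq_add_im_sq hR.le (by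
    show a ^ 2 + √(R ^ 2 - a ^ 2) ^ 2 = R ^ 2
    rw [sq_sqrt hv.le]
    ring)
  refine ⟨u, hu, ?_⟩
  have hfoot : 2 * R ^ 2 * z.re - u.re * (s + R ^ 2) = 0 := by
    change 2 * R ^ 2 * z.re - a * (s + R ^ 2) = 0
    simp only [a]
    field_simp
    ring
  have hsq := sq_mul_sinh_dist_of_mem_ell z hu
  rw [hfoot, zero_pow two_ne_zero, add_zero, sq_eq_sq_iff_abs_eq_abs, abs_mul u.im,
    abs_of_pos u.im_pos, abs_of_nonneg (by positivity)] at hsq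
  rw [eq_div_iff (by positivity)]
  exact mul_left_cancel₀ u.im_pos.ne' (by linear_combination hsq)

theorem sinh_infDist_ell {R : ℝ} (hR : 0 < R) (z : ℍ) :
    sinh (Metric.infDist z (ell R)) = |z.re ^ 2 + z.im ^ 2 - R ^ 2| / (2 * R * z.im) := by
  obtain ⟨u₀, hu₀, hsinh⟩ := exists_mem_ell_sinh_dist_eq hR z
  suffices Metric.infDist z (ell R) = dist z u₀ by rw [this, hsinh]
  refine le_antisymm (Metric.infDist_le_dist_of_mem hu₀)
    ((Metric.le_infDist ⟨u₀, hu₀⟩).2 fun u hu => ?_)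
  rw [← sinh_le_sinh, hsinh]
  exact div_le_sinh_dist_of_mem_ell hR z hu

theorem abs_dist_I_sub_dist_vpt_two_eq_log_iff (z : ℍ) :
    |dist z I - dist z (vpt 2 (by norm_num))| = log (3 / 2) ↔
      24 + 6 * z.re ^ 4 - 26 * z.im ^ 2 + 6 * z.im ^ 4 + 3 * z.re ^ 2 * (-17 + 4 * z.im ^ 2) = 0 := by
  have hy := z.im_pos
  have hcoshL : cosh (log (3 / 2)) = 13 / 12 := by rw [cosh_log (by norm_num)]; norm_num
  have hfoci : log (3 / 2) < dist z I + dist z (vpt 2 (by norm_num)) :=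
    calc log (3 / 2) < log 2 := log_lt_log (by norm_num) (by norm_num)
      _ = dist I (vpt 2 (by norm_num)) := by
        rw [dist_of_re_eq (by rw [I_re, vpt_re]), I_im, vpt_im, log_one, dist_zero_left,
          norm_of_nonneg (log_nonneg one_le_two)]
      _ ≤ _ := dist_triangle_left _ _ _
  have hquartic : (cosh (dist z I) * cosh (dist z (vpt 2 (by norm_num))) - 13 / 12) ^ 2
      - (cosh (dist z I) ^ 2 - 1) * (cosh (dist z (vpt 2 (by norm_num))) ^ 2 - 1) =
      (24 + 6 * z.re ^ 4 - 26 * z.im ^ 2 + 6 * z.im ^ 4 + 3 * z.re ^ 2 * (-17 + 4 * z.im ^ 2))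
        / (144 * z.im ^ 2) := by
    rw [cosh_dist_eq_re_im, cosh_dist_eq_re_im, I_re, I_im, vpt_re, vpt_im]
    field_simp
    ring
  rw [abs_sub_eq_iff_cosh_of_lt_add (log_nonneg (by norm_num)) hfoci, hcoshL, ← sub_eq_zero,
    hquartic, div_eq_zero_iff, or_iff_left (by positivity)]

theorem sinh_dist_I_eq_iff (z : ℍ) :
    24 + 6 * z.re ^ 4 - 26 * z.im ^ 2 + 6 * z.im ^ 4 + 3 * z.re ^ 2 * (-17 + 4 * z.im ^ 2) = 0 ↔
      sinh (dist z I) = (√77 / 5) * sinh (Metric.infDist z (ell √(11 / 7))) := by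
  have hy := z.im_pos
  have hR : √(11 / 7) ^ 2 = 11 / 7 := sq_sqrt (by norm_num)
  have h77 : √77 = 7 * √(11 / 7) := by
    rw [show (77 : ℝ) = 7 ^ 2 * (11 / 7) by norm_num, sqrt_mul (by positivity),
      sqrt_sq (by norm_num)]
  have hrhs : √77 / 5 * (|z.re ^ 2 + z.im ^ 2 - √(11 / 7) ^ 2| / (2 * √(11 / 7) * z.im)) =
      |7 * (z.re ^ 2 + z.im ^ 2) - 11| / (10 * z.im) := by
    rw [hR, h77, show 7 * (z.re ^ 2 + z.im ^ 2) - 11 = 7 * (z.re ^ 2 + z.im ^ 2 - 11 / 7) by ring,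
      abs_mul, abs_of_pos (by norm_num : (0 : ℝ) < 7)]
    field_simp
    ring
  have hsq := sq_mul_sinh_dist z I
  rw [I_re, I_im] at hsq
  rw [sinh_infDist_ell (by positivity), hrhs,
    ← sq_eq_sq₀ (sinh_nonneg_iff.2 dist_nonneg) (by positivity), div_pow, sq_abs,
    eq_div_iff (by positivity)]
  constructor
  · intro h
    linear_combination 25 * hsq - 4 * h
  · intro h
    linear_combination (25 / 4) * hsq - (1 / 4) * h

/-- The two-focus hyperbola with foci `i`, `2i` and distance-difference `log(3/2)`
equals the quartic curve `24 + 6x⁴ − 26y² + 6y⁴ + 3x²(−17 + 4y²) = 0`, which in turn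
equals the focus/directrix hyperbola with `ε = √77/5` and directrix `ℓ_{√(11/7)}`. -/
theorem stmt18 :
    {z : ℍ | |dist z UpperHalfPlane.I - dist z (vpt 2 (by norm_num))| = Real.log (3 / 2)} =
      {z : ℍ | 24 + 6 * z.re ^ 4 - 26 * z.im ^ 2 + 6 * z.im ^ 4
        + 3 * z.re ^ 2 * (-17 + 4 * z.im ^ 2) = 0} ∧
    {z : ℍ | 24 + 6 * z.re ^ 4 - 26 * z.im ^ 2 + 6 * z.im ^ 4
        + 3 * z.re ^ 2 * (-17 + 4 * z.im ^ 2) = 0} =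
      {z : ℍ | Real.sinh (dist z UpperHalfPlane.I) =
        (Real.sqrt 77 / 5) * Real.sinh (Metric.infDist z (ell (Real.sqrt (11 / 7))))} :=
  ⟨Set.ext abs_dist_I_sub_dist_vpt_two_eq_log_iff, Set.ext sinh_dist_I_eq_iff⟩
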